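/- Let (F^θ)_{θ∈Θ} and (Q^θ)_{θ∈Θ} be common-value information structures with mF^θ = mQ^θ for every θ ∈ Θ (all marginals strictly positive), and let F(t) := Σ_θ μ₀(θ)F^θ(t) and Q(t) := Σ_θ μ₀(θ)Q^θ(t). Suppose the family of posteriors {μ(s)}_{s∈S} ⊆ ℝ^Θ is affinely independent. If E^c(Γ,F) ⊇ E^c(Γ,Q) for every separable common-value affine coordination game Γ, then F is cCAD-higher than Q. -/

import Mathlib

open Finset

def IsPMF {n : ℕ} {S : Type*} [Fintype S] (F : (Fin (n + 2) → S) → ℝ) : Prop :=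
  (∀ t, 0 ≤ F t) ∧ ∑ t : Fin (n + 2) → S, F t = 1

def Exchangeable {n : ℕ} {S : Type*} [Fintype S] (F : (Fin (n + 2) → S) → ℝ) : Prop :=
  ∀ (π : Equiv.Perm (Fin (n + 2))) (t : Fin (n + 2) → S), F (t ∘ π) = F t

noncomputable def marg {n : ℕ} {S : Type*} [Fintype S] [LinearOrder S]
    (F : (Fin (n + 2) → S) → ℝ) (s : S) : ℝ :=
  ∑ t : Fin (n + 2) → S, if t 0 = s then F t else 0

noncomputable def condProb {n : ℕ} {S : Type*} [Fintype S] [LinearOrder S]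
    (F : (Fin (n + 2) → S) → ℝ) (s : S) (K : Finset S) : ℝ :=
  (∑ t : Fin (n + 2) → S, if t 0 = s ∧ t 1 ∈ K then F t else 0) / marg F s

def upSet {S : Type*} [Fintype S] [LinearOrder S] (shat : S) : Finset S :=
  univ.filter (fun y => shat ≤ y)

def downSet {S : Type*} [Fintype S] [LinearOrder S] (shat : S) : Finset S :=
  univ.filter (fun y => y ≤ shat)

def cCAD {n : ℕ} {S : Type*} [Fintype S] [LinearOrder S]
    (F Q : (Fin (n + 2) → S) → ℝ) : Prop :=
  (∀ s, marg F s = marg Q s) ∧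
  ∀ s : S,
    (∀ shat : S, shat ≤ s → condProb F s (upSet shat) ≥ condProb Q s (upSet shat)) ∧
    (∀ shat : S, s ≤ shat → condProb F s (downSet shat) ≥ condProb Q s (downSet shat))

/-- The unconditional joint distribution of signals: `F̄(t) = Σ_θ μ₀(θ) F^θ(t)`. -/
noncomputable def uncond {n : ℕ} {S : Type*} {Θ : Type*} [Fintype Θ]
    (μ₀ : Θ → ℝ) (F : Θ → (Fin (n + 2) → S) → ℝ) (t : Fin (n + 2) → S) : ℝ :=
  ∑ θ : Θ, μ₀ θ * F θ t

noncomputable def posterior {n : ℕ} {S : Type*} [Fintype S] [LinearOrder S]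
    {Θ : Type*} [Fintype Θ] (μ₀ : Θ → ℝ)
    (F : Θ → (Fin (n + 2) → S) → ℝ) (s : S) (θ : Θ) : ℝ :=
  μ₀ θ * marg (F θ) s / ∑ θ' : Θ, μ₀ θ' * marg (F θ') s


/-- The posteriors `{μ(s)}_{s∈S} ⊆ ℝ^Θ` form an affinely independent family. -/
def AffinelyIndependentPosteriors {n : ℕ} {S : Type*} [Fintype S] [LinearOrder S]
    {Θ : Type*} [Fintype Θ] (μ₀ : Θ → ℝ) (F : Θ → (Fin (n + 2) → S) → ℝ) : Prop :=
  ∀ lam : S → ℝ, (∀ θ, ∑ s : S, lam s * posterior μ₀ F s θ = 0) →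
    (∑ s : S, lam s = 0) → ∀ s, lam s = 0

/-- A separable common-value affine coordination game:
`d(A,θ) = α(θ) + β·(k·A + l)` with constant `β ≥ 0` and `k > 0`. -/
structure SepGame (Θ : Type*) where
  α : Θ → ℝ
  β : ℝ
  k : ℝ
  l : ℝ
  hβ : 0 ≤ β
  hk : 0 < k

noncomputable def payoff {Θ : Type*} (G : SepGame Θ) (A : ℕ) (θ : Θ) : ℝ :=
  G.α θ + G.β * (G.k * (A : ℝ) + G.l)

def acts {n : ℕ} {S : Type*} (σ : S → Bool) (t : Fin (n + 2) → S) : ℕ :=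
  (univ.filter (fun j : Fin (n + 2) => j ≠ 0 ∧ σ (t j) = true)).card

noncomputable def U {n : ℕ} {S : Type*} [Fintype S] [LinearOrder S]
    {Θ : Type*} [Fintype Θ] (G : SepGame Θ) (μ₀ : Θ → ℝ)
    (F : Θ → (Fin (n + 2) → S) → ℝ) (σ : S → Bool) (s : S) : ℝ :=
  ∑ θ : Θ, posterior μ₀ F s θ *
    ∑ t : Fin (n + 2) → S,
      if t 0 = s then (F θ t / marg (F θ) s) * payoff G (acts σ t) θ else 0

def IsCutoff {S : Type*} [LinearOrder S] (σ : S → Bool) : Prop :=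
  ∃ stilde : S, ∀ s, σ s = true ↔ stilde ≤ s

def IsCutoffEquilibrium {n : ℕ} {S : Type*} [Fintype S] [LinearOrder S]
    {Θ : Type*} [Fintype Θ] (G : SepGame Θ) (μ₀ : Θ → ℝ)
    (F : Θ → (Fin (n + 2) → S) → ℝ) (σ : S → Bool) : Prop :=
  IsCutoff σ ∧
  ∀ s : S, (σ s = true → 0 ≤ U G μ₀ F σ s) ∧ (σ s = false → U G μ₀ F σ s ≤ 0)


set_option linter.unusedSectionVars false

section AuxCCAD

variable {n : ℕ} {S : Type*} [Fintype S] [LinearOrder S] {Θ : Type*} [Fintype Θ]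

lemma uncond_sum_ite (μ₀ : Θ → ℝ) (F : Θ → (Fin (n + 2) → S) → ℝ)
    (P : (Fin (n + 2) → S) → Prop) [DecidablePred P] :
    (∑ t : Fin (n + 2) → S, if P t then uncond μ₀ F t else 0)
      = ∑ θ : Θ, μ₀ θ * ∑ t : Fin (n + 2) → S, if P t then F θ t else 0 := by
  simp only [uncond, Finset.mul_sum, mul_ite, mul_zero]
  rw [Finset.sum_comm]
  refine Finset.sum_congr rfl fun t _ => ?_
  by_cases h : P t <;> simp [h]

lemma marg_uncond (μ₀ : Θ → ℝ) (F : Θ → (Fin (n + 2) → S) → ℝ) (s : S) :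
    marg (uncond μ₀ F) s = ∑ θ : Θ, μ₀ θ * marg (F θ) s := by
  simpa only [marg] using uncond_sum_ite μ₀ F (fun t => t 0 = s)

lemma Dpos_ccad (μ₀ : Θ → ℝ) (hμ₀ : ∀ θ, 0 ≤ μ₀ θ) (hμ₀sum : ∑ θ : Θ, μ₀ θ = 1)
    (F : Θ → (Fin (n + 2) → S) → ℝ) (s : S) (hpos : ∀ θ, 0 < marg (F θ) s) :
    0 < ∑ θ : Θ, μ₀ θ * marg (F θ) s := by
  obtain ⟨θ0, hθ0⟩ : ∃ θ0, 0 < μ₀ θ0 := by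
    by_contra h
    push_neg at h
    have : ∑ θ : Θ, μ₀ θ = 0 :=
      le_antisymm (Finset.sum_nonpos fun θ _ => h θ) (Finset.sum_nonneg fun θ _ => hμ₀ θ)
    rw [hμ₀sum] at this; norm_num at this
  refine Finset.sum_pos' (fun θ _ => mul_nonneg (hμ₀ θ) (hpos θ).le) ⟨θ0, Finset.mem_univ _, ?_⟩
  exact mul_pos hθ0 (hpos θ0)

lemma post_sum_one (μ₀ : Θ → ℝ) (F : Θ → (Fin (n + 2) → S) → ℝ) (s : S)
    (hD : (∑ θ' : Θ, μ₀ θ' * marg (F θ') s) ≠ 0) :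
    ∑ θ : Θ, posterior μ₀ F s θ = 1 := by
  simp only [posterior]
  rw [← Finset.sum_div, div_self hD]

end AuxCCAD
set_option linter.unusedSectionVars false

section AuxCCAD2

variable {n : ℕ} {S : Type*} [Fintype S] [LinearOrder S] {Θ : Type*} [Fintype Θ]

lemma swap_count (F : (Fin (n + 2) → S) → ℝ) (hex : Exchangeable F)
    {j : Fin (n + 2)} (hj : j ≠ 0) (s : S) (σ : S → Bool) :
    (∑ t : Fin (n + 2) → S, if t 0 = s ∧ σ (t j) = true then F t else 0)
      = ∑ t : Fin (n + 2) → S, if t 0 = s ∧ σ (t 1) = true then F t else 0 := by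
  rcases eq_or_ne j 1 with rfl | hj1
  · rfl
  · refine Fintype.sum_equiv
      ⟨fun t => t ∘ Equiv.swap 1 j, fun t => t ∘ Equiv.swap 1 j,
        fun t => by funext i; simp [Function.comp, Equiv.swap_apply_self],
        fun t => by funext i; simp [Function.comp, Equiv.swap_apply_self]⟩ _ _ fun t => ?_
    have h0 : Equiv.swap (1 : Fin (n + 2)) j 0 = 0 :=
      Equiv.swap_apply_of_ne_of_ne (by simp) (Ne.symm hj)
    have h1 : Equiv.swap (1 : Fin (n + 2)) j 1 = j := Equiv.swap_apply_left 1 j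
    have hF : F (t ∘ Equiv.swap 1 j) = F t := hex (Equiv.swap 1 j) t
    show _ = (if (t ∘ Equiv.swap 1 j) 0 = s ∧ σ ((t ∘ Equiv.swap 1 j) 1) = true
        then F (t ∘ Equiv.swap 1 j) else 0)
    simp only [Function.comp_apply, h0, h1, hF]

lemma acts_cast (σ : S → Bool) (t : Fin (n + 2) → S) :
    ((acts σ t : ℕ) : ℝ)
      = ∑ j : Fin (n + 2), if j ≠ 0 ∧ σ (t j) = true then (1 : ℝ) else 0 := by
  rw [acts, Finset.card_filter, Nat.cast_sum]
  exact Finset.sum_congr rfl fun j _ => by split_ifs <;> simp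

lemma sum_acts (F : (Fin (n + 2) → S) → ℝ) (hex : Exchangeable F) (s : S) (σ : S → Bool) :
    (∑ t : Fin (n + 2) → S, if t 0 = s then F t * ((acts σ t : ℕ) : ℝ) else 0)
      = (n + 1 : ℝ) * ∑ t : Fin (n + 2) → S, if t 0 = s ∧ σ (t 1) = true then F t else 0 := by
  have key : ∀ t : Fin (n + 2) → S,
      (if t 0 = s then F t * ((acts σ t : ℕ) : ℝ) else 0)
        = ∑ j : Fin (n + 2), if j ≠ 0 ∧ (t 0 = s ∧ σ (t j) = true) then F t else 0 := by
    intro t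
    by_cases h : t 0 = s
    · simp only [h, if_true, acts_cast, Finset.mul_sum, mul_ite, mul_one, mul_zero, true_and]
    · simp [h]
  rw [Finset.sum_congr rfl fun t _ => key t, Finset.sum_comm]
  have inner : ∀ j : Fin (n + 2),
      (∑ t : Fin (n + 2) → S, if j ≠ 0 ∧ (t 0 = s ∧ σ (t j) = true) then F t else 0)
        = if j ≠ 0 then (∑ t : Fin (n + 2) → S, if t 0 = s ∧ σ (t 1) = true then F t else 0)
          else 0 := by
    intro j
    by_cases hj : j ≠ 0
    · rw [if_pos hj, ← swap_count F hex hj s σ]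
      exact Finset.sum_congr rfl fun t _ => by simp [hj]
    · simp only [not_ne_iff] at hj
      subst hj
      simp
  rw [Finset.sum_congr rfl fun j _ => inner j, Finset.sum_ite, Finset.sum_const_zero,
    Finset.sum_const, add_zero, nsmul_eq_mul]
  congr 1
  have : (Finset.univ.filter (fun j : Fin (n + 2) => j ≠ 0)).card = n + 1 := by
    rw [Finset.filter_ne']
    simp [Finset.card_erase_of_mem]
  rw [this]
  push_cast
  ring

end AuxCCAD2
section AuxCCAD3

variable {n : ℕ} {S : Type*} [Fintype S] [LinearOrder S] {Θ : Type*} [Fintype Θ]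

lemma U_formula (G : SepGame Θ) (hβ : G.β = 1) (hk : G.k = 1) (hl : G.l = 0)
    (μ₀ : Θ → ℝ) (F : Θ → (Fin (n + 2) → S) → ℝ)
    (hFex : ∀ θ, Exchangeable (F θ)) (σ : S → Bool) (s : S)
    (hm : ∀ θ, marg (F θ) s ≠ 0)
    (hD : (∑ θ' : Θ, μ₀ θ' * marg (F θ') s) ≠ 0) :
    U G μ₀ F σ s = (∑ θ : Θ, posterior μ₀ F s θ * G.α θ)
      + (n + 1 : ℝ) * condProb (uncond μ₀ F) s (Finset.univ.filter fun y => σ y = true) := by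
  have hpay : ∀ (A : ℕ) (θ : Θ), payoff G A θ = G.α θ + (A : ℝ) := by
    intro A θ; simp [payoff, hβ, hk, hl]
  have inner : ∀ θ : Θ,
      (∑ t : Fin (n + 2) → S,
          if t 0 = s then (F θ t / marg (F θ) s) * payoff G (acts σ t) θ else 0)
        = G.α θ + (n + 1 : ℝ) *
            ((∑ t : Fin (n + 2) → S, if t 0 = s ∧ σ (t 1) = true then F θ t else 0)
              / marg (F θ) s) := by
    intro θ
    have split : ∀ t : Fin (n + 2) → S,
        (if t 0 = s then (F θ t / marg (F θ) s) * payoff G (acts σ t) θ else 0)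
          = (if t 0 = s then F θ t else 0) * (G.α θ / marg (F θ) s)
            + (if t 0 = s then F θ t * ((acts σ t : ℕ) : ℝ) else 0) / marg (F θ) s := by
      intro t
      by_cases h : t 0 = s
      · simp only [h, if_true, hpay]
        field_simp
      · simp [h]
    rw [Finset.sum_congr rfl fun t _ => split t, Finset.sum_add_distrib, ← Finset.sum_mul,
      ← Finset.sum_div, sum_acts (F θ) (hFex θ) s σ]
    have hmargdef : (∑ t : Fin (n + 2) → S, if t 0 = s then F θ t else 0) = marg (F θ) s := rfl
    rw [hmargdef]
    have h1 : marg (F θ) s * (G.α θ / marg (F θ) s) = G.α θ := by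
      rw [mul_div_assoc']
      exact mul_div_cancel_left₀ _ (hm θ)
    rw [h1, mul_div_assoc]
  unfold U
  rw [Finset.sum_congr rfl fun θ _ => by rw [inner θ]]
  simp only [mul_add, Finset.sum_add_distrib]
  congr 1
  have hnum : (∑ t : Fin (n + 2) → S,
      if t 0 = s ∧ t 1 ∈ (Finset.univ.filter fun y => σ y = true) then uncond μ₀ F t else 0)
        = ∑ θ : Θ, μ₀ θ *
            ∑ t : Fin (n + 2) → S, if t 0 = s ∧ σ (t 1) = true then F θ t else 0 := by
    rw [Finset.sum_congr rfl fun t _ => ?_]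
    · exact uncond_sum_ite μ₀ F (fun t => t 0 = s ∧ σ (t 1) = true)
    · simp
  rw [condProb, hnum, marg_uncond, Finset.sum_div, Finset.mul_sum]
  refine Finset.sum_congr rfl fun θ _ => ?_
  simp only [posterior]
  have hmθ := hm θ
  field_simp

end AuxCCAD3
section AuxCCAD4

variable {n : ℕ} {S : Type*} [Fintype S] [LinearOrder S] {Θ : Type*} [Fintype Θ]

lemma exists_alpha (μ₀ : Θ → ℝ) (Q : Θ → (Fin (n + 2) → S) → ℝ)
    (hAI : AffinelyIndependentPosteriors μ₀ Q)
    (hsum1 : ∀ s : S, ∑ θ : Θ, posterior μ₀ Q s θ = 1) (c : S → ℝ) :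
    ∃ α : Θ → ℝ, ∀ s : S, ∑ θ : Θ, posterior μ₀ Q s θ * α θ = c s := by
  classical
  set v : S → (Θ → ℝ) := fun s θ => posterior μ₀ Q s θ with hv
  let g : (S → ℝ) →ₗ[ℝ] (Θ → ℝ) :=
    { toFun := fun lam θ => ∑ s : S, lam s * v s θ
      map_add' := by
        intro x y
        funext θ
        simp [add_mul, Finset.sum_add_distrib]
      map_smul' := by
        intro r x
        funext θ
        simp [Finset.mul_sum, mul_assoc] }
  have hg : Function.Injective g := by
    rw [injective_iff_map_eq_zero]
    intro lam hlam
    have h0 : ∀ θ, ∑ s : S, lam s * v s θ = 0 := fun θ => congrFun hlam θ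
    have hsum : ∑ s : S, lam s = 0 := by
      have : ∑ θ : Θ, ∑ s : S, lam s * v s θ = 0 := by
        simp [h0]
      rw [Finset.sum_comm] at this
      simpa [← Finset.mul_sum, hsum1, hv] using this
    funext s
    exact hAI lam h0 hsum s
  obtain ⟨φ, hφ⟩ := LinearMap.dualMap_surjective_of_injective hg
    { toFun := fun lam => ∑ s : S, lam s * c s
      map_add' := by intro x y; simp [add_mul, Finset.sum_add_distrib]
      map_smul' := by intro r x; simp [Finset.mul_sum, mul_assoc] }
  refine ⟨fun θ => φ (fun θ' => if θ = θ' then 1 else 0), fun s => ?_⟩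
  have hgv : g (fun s' => if s = s' then 1 else 0) = v s := by
    funext θ
    simp [g]
  have key : φ (v s) = c s := by
    have := congrFun (congrArg DFunLike.coe hφ) (fun s' => if s = s' then 1 else 0)
    simp only [LinearMap.dualMap_apply'] at this
    rw [LinearMap.comp_apply, hgv] at this
    simpa using this
  calc ∑ θ : Θ, posterior μ₀ Q s θ * φ (fun θ' => if θ = θ' then 1 else 0)
      = φ (∑ θ : Θ, v s θ • (fun θ' => if θ = θ' then (1:ℝ) else 0)) := by
        rw [map_sum]
        refine Finset.sum_congr rfl fun θ _ => ?_
        rw [map_smul]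
        simp [hv, smul_eq_mul]
    _ = φ (v s) := by rw [← pi_eq_sum_univ (v s)]
    _ = c s := key

lemma condProb_total (F : (Fin (n + 2) → S) → ℝ) (s : S) (K : Finset S)
    (hK : ∀ y : S, y ∈ K) (hm : marg F s ≠ 0) : condProb F s K = 1 := by
  rw [condProb]
  have : (∑ t : Fin (n + 2) → S, if t 0 = s ∧ t 1 ∈ K then F t else 0) = marg F s := by
    rw [marg]
    exact Finset.sum_congr rfl fun t _ => by simp [hK]
  rw [this, div_self hm]

lemma condProb_compl (F : (Fin (n + 2) → S) → ℝ) (s : S) (shat : S)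
    (hm : marg F s ≠ 0) :
    condProb F s (downSet shat)
      = 1 - condProb F s (Finset.univ.filter fun y => shat < y) := by
  have hadd : (∑ t : Fin (n + 2) → S, if t 0 = s ∧ t 1 ∈ downSet shat then F t else 0)
      + (∑ t : Fin (n + 2) → S,
          if t 0 = s ∧ t 1 ∈ (Finset.univ.filter fun y => shat < y) then F t else 0)
      = marg F s := by
    rw [← Finset.sum_add_distrib, marg]
    refine Finset.sum_congr rfl fun t _ => ?_
    by_cases h0 : t 0 = s
    · rcases le_or_gt (t 1) shat with h1 | h1 <;>
        simp [downSet, h0, h1, not_le.mpr, not_lt.mpr]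
    · simp [h0]
  rw [condProb, condProb, eq_sub_iff_add_eq, ← add_div, hadd, div_self hm]

end AuxCCAD4
lemma key_engine {n : ℕ} {S : Type*} [Fintype S] [LinearOrder S]
    {Θ : Type*} [Fintype Θ]
    (μ₀ : Θ → ℝ) (hμ₀ : ∀ θ, 0 ≤ μ₀ θ) (hμ₀sum : ∑ θ : Θ, μ₀ θ = 1)
    (F Q : Θ → (Fin (n + 2) → S) → ℝ)
    (hFex : ∀ θ, Exchangeable (F θ)) (hQex : ∀ θ, Exchangeable (Q θ))
    (hmarg : ∀ θ s, marg (F θ) s = marg (Q θ) s)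
    (hFpos : ∀ θ s, 0 < marg (F θ) s)
    (hAI : AffinelyIndependentPosteriors μ₀ Q)
    (hincl : ∀ (G : SepGame Θ) (σ : S → Bool),
      IsCutoffEquilibrium G μ₀ Q σ → IsCutoffEquilibrium G μ₀ F σ)
    (σ : S → Bool) (hcut : IsCutoff σ) (s : S) :
    (σ s = true → condProb (uncond μ₀ Q) s (Finset.univ.filter fun y => σ y = true)
        ≤ condProb (uncond μ₀ F) s (Finset.univ.filter fun y => σ y = true)) ∧
    (σ s = false → condProb (uncond μ₀ F) s (Finset.univ.filter fun y => σ y = true)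
        ≤ condProb (uncond μ₀ Q) s (Finset.univ.filter fun y => σ y = true)) := by
  classical
  have hQpos : ∀ θ s', 0 < marg (Q θ) s' := fun θ s' => hmarg θ s' ▸ hFpos θ s'
  have hDQ : ∀ s', 0 < ∑ θ : Θ, μ₀ θ * marg (Q θ) s' :=
    fun s' => Dpos_ccad μ₀ hμ₀ hμ₀sum Q s' (fun θ => hQpos θ s')
  have hDF : ∀ s', 0 < ∑ θ : Θ, μ₀ θ * marg (F θ) s' :=
    fun s' => Dpos_ccad μ₀ hμ₀ hμ₀sum F s' (fun θ => hFpos θ s')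
  have hpostEq : ∀ (s' : S) (θ : Θ), posterior μ₀ F s' θ = posterior μ₀ Q s' θ := by
    intro s' θ
    simp only [posterior, hmarg]
  have hsum1 : ∀ s' : S, ∑ θ : Θ, posterior μ₀ Q s' θ = 1 :=
    fun s' => post_sum_one μ₀ Q s' (hDQ s').ne'
  set K : Finset S := Finset.univ.filter fun y => σ y = true with hK
  set u : S → ℝ := fun s' => if s' = s then 0 else if σ s' = true then 1 else -1 with hu
  obtain ⟨α, hα⟩ := exists_alpha μ₀ Q hAI hsum1
    (fun s' => u s' - (n + 1 : ℝ) * condProb (uncond μ₀ Q) s' K)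
  set G : SepGame Θ := ⟨α, 1, 1, 0, zero_le_one, one_pos⟩ with hG
  have hUQ : ∀ s' : S, U G μ₀ Q σ s' = u s' := by
    intro s'
    rw [U_formula G rfl rfl rfl μ₀ Q hQex σ s' (fun θ => (hQpos θ s').ne') (hDQ s').ne']
    have : ∑ θ : Θ, posterior μ₀ Q s' θ * G.α θ
        = u s' - (n + 1 : ℝ) * condProb (uncond μ₀ Q) s' K := hα s'
    rw [this]
    ring
  have heqQ : IsCutoffEquilibrium G μ₀ Q σ := by
    refine ⟨hcut, fun s' => ⟨fun ht => ?_, fun hf => ?_⟩⟩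
    · rw [hUQ s', hu]
      by_cases h : s' = s <;> simp [h, ht]
    · rw [hUQ s', hu]
      by_cases h : s' = s <;> simp [h, hf]
  have heqF := hincl G σ heqQ
  have hUF : U G μ₀ F σ s
      = u s + (n + 1 : ℝ) * (condProb (uncond μ₀ F) s K - condProb (uncond μ₀ Q) s K) := by
    rw [U_formula G rfl rfl rfl μ₀ F hFex σ s (fun θ => (hFpos θ s).ne') (hDF s).ne']
    have : ∑ θ : Θ, posterior μ₀ F s θ * G.α θ
        = u s - (n + 1 : ℝ) * condProb (uncond μ₀ Q) s K := by
      rw [Finset.sum_congr rfl fun θ _ => by rw [hpostEq s θ]]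
      exact hα s
    rw [this]
    ring
  have hus : u s = 0 := by simp [hu]
  have hn1 : (0 : ℝ) < (n + 1 : ℝ) := by positivity
  constructor
  · intro ht
    have h0 := (heqF.2 s).1 ht
    rw [hUF, hus, zero_add] at h0
    nlinarith
  · intro hf
    have h0 := (heqF.2 s).2 hf
    rw [hUF, hus, zero_add] at h0
    nlinarith

/-- under affinely independent posteriors, if the cutoff-equilibrium
set weakly expands from `Q` to `F` in every separable common-value affine
coordination game, then the unconditional joint distribution under `F` is
cCAD-higher than under `Q`. -/
theorem cutoff_inclusion_implies_ccad_uncond {n : ℕ}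
    {S : Type*} [Fintype S] [LinearOrder S] [Nonempty S]
    {Θ : Type*} [Fintype Θ] [Nonempty Θ]
    (μ₀ : Θ → ℝ) (hμ₀ : ∀ θ, 0 ≤ μ₀ θ) (hμ₀sum : ∑ θ : Θ, μ₀ θ = 1)
    (F Q : Θ → (Fin (n + 2) → S) → ℝ)
    (hFpmf : ∀ θ, IsPMF (F θ)) (hQpmf : ∀ θ, IsPMF (Q θ))
    (hFex : ∀ θ, Exchangeable (F θ)) (hQex : ∀ θ, Exchangeable (Q θ))
    (hmarg : ∀ θ s, marg (F θ) s = marg (Q θ) s)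
    (hFpos : ∀ θ s, 0 < marg (F θ) s)
    (hAI : AffinelyIndependentPosteriors μ₀ Q)
    (hincl : ∀ (G : SepGame Θ) (σ : S → Bool),
      IsCutoffEquilibrium G μ₀ Q σ → IsCutoffEquilibrium G μ₀ F σ) :
    cCAD (uncond μ₀ F) (uncond μ₀ Q) := by
  classical
  have hQpos : ∀ θ s, 0 < marg (Q θ) s := fun θ s => hmarg θ s ▸ hFpos θ s
  have hmF : ∀ s : S, marg (uncond μ₀ F) s ≠ 0 := by
    intro s
    rw [marg_uncond]
    exact (Dpos_ccad μ₀ hμ₀ hμ₀sum F s (fun θ => hFpos θ s)).ne'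
  have hmQ : ∀ s : S, marg (uncond μ₀ Q) s ≠ 0 := by
    intro s
    rw [marg_uncond]
    exact (Dpos_ccad μ₀ hμ₀ hμ₀sum Q s (fun θ => hQpos θ s)).ne'
  constructor
  · intro s
    rw [marg_uncond, marg_uncond]
    exact Finset.sum_congr rfl fun θ _ => by rw [hmarg]
  · intro s
    constructor
    · intro shat hshat
      have hcut : IsCutoff (fun y => decide (shat ≤ y)) :=
        ⟨shat, fun y => by simp⟩
      have h := (key_engine μ₀ hμ₀ hμ₀sum F Q hFex hQex hmarg hFpos hAI hincl
        (fun y => decide (shat ≤ y)) hcut s).1 (decide_eq_true hshat)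
      have hKeq : (Finset.univ.filter fun y => (decide (shat ≤ y)) = true) = upSet shat := by
        ext y
        simp [upSet]
      rwa [hKeq] at h
    · intro shat hshat
      by_cases hmax : ∀ y : S, y ≤ shat
      · have h1 : condProb (uncond μ₀ F) s (downSet shat) = 1 :=
          condProb_total _ _ _ (fun y => by simp [downSet, hmax y]) (hmF s)
        have h2 : condProb (uncond μ₀ Q) s (downSet shat) = 1 :=
          condProb_total _ _ _ (fun y => by simp [downSet, hmax y]) (hmQ s)
        rw [h1, h2]
      · push_neg at hmax
        obtain ⟨y0, hy0⟩ := hmax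
        have hT : (Finset.univ.filter fun y => shat < y).Nonempty :=
          ⟨y0, by simp [hy0]⟩
        set st := (Finset.univ.filter fun y => shat < y).min' hT with hst
        have hstT : shat < st :=
          (Finset.mem_filter.mp ((Finset.univ.filter fun y => shat < y).min'_mem hT)).2
        have hcut : IsCutoff (fun y => decide (shat < y)) := by
          refine ⟨st, fun y => ?_⟩
          simp only [decide_eq_true_eq]
          constructor
          · intro h
            exact (Finset.univ.filter fun y => shat < y).min'_le y (by simp [h])
          · intro h
            exact lt_of_lt_of_le hstT h
        have hσs : (fun y => decide (shat < y)) s = false :=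
          decide_eq_false (not_lt.mpr hshat)
        have h := (key_engine μ₀ hμ₀ hμ₀sum F Q hFex hQex hmarg hFpos hAI hincl
          (fun y => decide (shat < y)) hcut s).2 hσs
        have hKeq : (Finset.univ.filter fun y => (decide (shat < y)) = true)
            = Finset.univ.filter fun y => shat < y := by
          ext y
          simp
        rw [hKeq] at h
        rw [ge_iff_le, condProb_compl _ _ _ (hmF s), condProb_compl _ _ _ (hmQ s)]
        linarith
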